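/- Let n be a positive integer with r(n) = s and m(n) = t. If c(n) ≤ s(t−1) + 1, then y(n) = 2^{c(n)−t} − n^{t−1} < 0. -/

import Mathlib

/-!
Write `s = r(n)` and `t = m(n)`. For `n ≥ 2` we have `t ≥ 2`, `s ≥ 1` and `2 ^ (s - 1) < n` by
minimality of `s`, while the hypothesis gives `c(n) - t ≤ (s - 1)(t - 1)`. Hence
`2 ^ (c(n) - t) ≤ (2 ^ (s - 1)) ^ (t - 1) < n ^ (t - 1)`. For `n = 1` the hypothesis cannot hold,
since `s = 0` and `c(1) ≥ 4`.
-/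

lemma two_zpow_lt_pow_of_two_pow_lt {K : Type*} [Field K] [LinearOrder K] [IsStrictOrderedRing K]
    {s k : ℕ} {n : K} {e : ℤ} (hk : k ≠ 0) (hn : 2 ^ s < n) (he : e ≤ (s * k : ℕ)) :
    (2 : K) ^ e < n ^ k :=
  calc (2 : K) ^ e ≤ 2 ^ ((s * k : ℕ) : ℤ) := zpow_le_zpow_right₀ one_le_two he
    _ = (2 ^ s) ^ k := by rw [zpow_natCast, pow_mul]
    _ < n ^ k := pow_lt_pow_left₀ hn (by positivity) hk

lemma two_pow_pred_lt_of_minimal {n r : ℕ} (hr : 1 ≤ r) (hmin : ∀ s : ℕ, n ≤ 2 ^ s → r ≤ s) :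
    2 ^ (r - 1) < n := by
  by_contra! h
  have := hmin (r - 1) h
  omega

lemma one_le_of_le_two_pow {n r : ℕ} (hn : 2 ≤ n) (h : n ≤ 2 ^ r) : 1 ≤ r := by
  by_contra! h0
  rw [Nat.lt_one_iff.mp h0, pow_zero] at h
  omega

lemma two_le_of_maximal_sq_le {n m : ℕ} (hn : 2 ≤ n)
    (hmax : ∀ w : ℕ, (w : ℤ) ^ 2 ≤ 2 * (n : ℤ) → w ≤ m) : 2 ≤ m :=
  hmax 2 (by push_cast; omega)

theorem stmt_general
    (z : ℕ → ℤ) (m r : ℕ → ℕ) (c : ℕ → ℤ) (y : ℕ → ℚ)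
    (hz : ∀ n : ℕ, 1 ≤ n → 3 * z n < 2 * (n : ℤ) ∧ ∀ w : ℤ, 3 * w < 2 * (n : ℤ) → w ≤ z n)
    (hm : ∀ n : ℕ, 1 ≤ n → (m n : ℤ) ^ 2 ≤ 2 * (n : ℤ) ∧ ∀ w : ℕ, (w : ℤ) ^ 2 ≤ 2 * (n : ℤ) → w ≤ m n)
    (hr : ∀ n : ℕ, 1 ≤ n → n ≤ 2 ^ r n ∧ ∀ s : ℕ, n ≤ 2 ^ s → r n ≤ s)
    (hc : ∀ n : ℕ, c n = 2 * (n : ℤ) - 2 * z n + 2)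
    (hy : ∀ n : ℕ, y n = (2 : ℚ) ^ (c n - (m n : ℤ)) - (n : ℚ) ^ ((m n : ℤ) - 1)) :
    ∀ n : ℕ, 1 ≤ n → c n ≤ (r n : ℤ) * ((m n : ℤ) - 1) + 1 → y n < 0 := by
  intro n hn hcle
  obtain rfl | hn2 : n = 1 ∨ 2 ≤ n := by omega
  · have hr1 : r 1 = 0 := Nat.le_zero.mp ((hr 1 le_rfl).2 0 le_rfl)
    have hz1 := (hz 1 le_rfl).1
    rw [hr1, hc] at hcle
    push_cast at hcle hz1
    omega
  have hm2 := two_le_of_maximal_sq_le hn2 (hm n hn).2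
  have hr1 := one_le_of_le_two_pow hn2 (hr n hn).1
  have hexp : c n - m n ≤ ((r n - 1) * (m n - 1) : ℕ) := by
    push_cast [Nat.cast_sub hr1, Nat.cast_sub (by omega : 1 ≤ m n)]
    nlinarith
  have hpow : (2 : ℚ) ^ (r n - 1) < n := by
    exact_mod_cast two_pow_pred_lt_of_minimal hr1 (hr n hn).2
  have hlt := two_zpow_lt_pow_of_two_pow_lt (by omega : m n - 1 ≠ 0) hpow hexp
  rw [hy n, show (m n : ℤ) - 1 = (m n - 1 : ℕ) by omega, zpow_natCast]
  linarith

theorem stmt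
    (z : ℕ → ℤ) (m r : ℕ → ℕ) (c x : ℕ → ℤ) (y : ℕ → ℚ)
    (hz : ∀ n : ℕ, 1 ≤ n → 3 * z n < 2 * (n : ℤ) ∧ ∀ w : ℤ, 3 * w < 2 * (n : ℤ) → w ≤ z n)
    (hm : ∀ n : ℕ, 1 ≤ n → (m n : ℤ) ^ 2 ≤ 2 * (n : ℤ) ∧ ∀ w : ℕ, (w : ℤ) ^ 2 ≤ 2 * (n : ℤ) → w ≤ m n)
    (hr : ∀ n : ℕ, 1 ≤ n → n ≤ 2 ^ r n ∧ ∀ s : ℕ, n ≤ 2 ^ s → r n ≤ s)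
    (hc : ∀ n : ℕ, c n = 2 * (n : ℤ) - 2 * z n + 2)
    (hx : ∀ n : ℕ, x n = z n - ((r n : ℤ) + 1) * (m n : ℤ))
    (hy : ∀ n : ℕ, y n = (2 : ℚ) ^ (c n - (m n : ℤ)) - (n : ℚ) ^ ((m n : ℤ) - 1)) :
    ∀ n : ℕ, 1 ≤ n → c n ≤ (r n : ℤ) * ((m n : ℤ) - 1) + 1 → y n < 0 :=
  stmt_general z m r c y hz hm hr hc hy
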